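/- If A is a block upper-triangular square matrix whose diagonal blocks A_{ii} each satisfy ξᵀA_{ii}ξ ≥ c_i|ξ|² with c_i > 0, then there exists a positive definite diagonal matrix S = diag(σ₁I,...,σ_mI) with σ_i > 0 and a constant η > 0 such that ξᵀ(SA)ξ ≥ η|ξ|² for all ξ. -/

import Mathlib

/-!
Young's inequality bounds the off-diagonal block `(i, j)` of the form by `ε |ξᵢ|² + D |ξⱼ|²`,
with `ε` as small as we like at the price of a large `D`. Take geometric weights `σᵢ = tⁱ`:
for `i < j` the block is weighted by `σᵢ`, and once `t ≥ 1 + D / δ` the geometric sum gives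
`D ∑_{i<j} σᵢ ≤ δ σⱼ`. Hence all the off-diagonal errors charged to `|ξⱼ|²` total at most
`(m ε + δ) σⱼ |ξⱼ|²`, which the diagonal term `c σⱼ |ξⱼ|²` absorbs.
-/

open Finset

theorem two_mul_abs_mul_le {x : ℝ} (hx : 0 < x) (u v : ℝ) :
    2 * |u * v| ≤ x * u ^ 2 + v ^ 2 / x := by
  have key : x * u ^ 2 + v ^ 2 / x - 2 * |u * v| = (x * |u| - |v|) ^ 2 / x := by
    rw [abs_mul, ← sq_abs u, ← sq_abs v]; field_simp; ring
  have : 0 ≤ (x * |u| - |v|) ^ 2 / x := by positivity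
  linarith

theorem neg_le_sum_sum_mul_mul {α β : Type*} [Fintype α] [Fintype β] (A : α → β → ℝ)
    (u : α → ℝ) (v : β → ℝ) {x : ℝ} (hx : 0 < x) :
    -((∑ a, ∑ b, |A a b|) / 2 * (x * ∑ a, u a ^ 2 + (∑ b, v b ^ 2) / x)) ≤
      ∑ a, ∑ b, u a * A a b * v b := by
  set C := x * ∑ a, u a ^ 2 + (∑ b, v b ^ 2) / x with hC
  have hterm : ∀ a b, -(|A a b| / 2 * C) ≤ u a * A a b * v b := by
    intro a b
    have hu : u a ^ 2 ≤ ∑ a, u a ^ 2 :=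
      single_le_sum (f := fun a => u a ^ 2) (fun _ _ => sq_nonneg _) (mem_univ a)
    have hv : v b ^ 2 ≤ ∑ b, v b ^ 2 :=
      single_le_sum (f := fun b => v b ^ 2) (fun _ _ => sq_nonneg _) (mem_univ b)
    have hyoung : 2 * |u a * v b| ≤ C :=
      (two_mul_abs_mul_le hx (u a) (v b)).trans (by rw [hC]; gcongr)
    calc -(|A a b| / 2 * C) ≤ -(|A a b| * |u a * v b|) := by
          linarith [mul_le_mul_of_nonneg_left hyoung (abs_nonneg (A a b))]
      _ = -|u a * A a b * v b| := by rw [abs_mul, abs_mul, abs_mul]; ring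
      _ ≤ u a * A a b * v b := neg_abs_le _
  simp only [sum_div, sum_mul, ← sum_neg_distrib]
  exact sum_le_sum fun a _ => sum_le_sum fun b _ => hterm a b

theorem Fin.mul_sum_Iio_pow_le {m : ℕ} {D δ : ℝ} (hδ : 0 < δ) (j : Fin m) :
    D * ∑ i ∈ Iio j, (1 + D / δ) ^ (i : ℕ) ≤ δ * (1 + D / δ) ^ (j : ℕ) := by
  have hrange : ∑ i ∈ Iio j, (1 + D / δ) ^ (i : ℕ) = ∑ k ∈ range j, (1 + D / δ) ^ k := by
    rw [← Nat.Iio_eq_range, ← Fin.map_valEmbedding_Iio, Finset.sum_map]; rfl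
  calc D * ∑ i ∈ Iio j, (1 + D / δ) ^ (i : ℕ)
      = δ * ((∑ k ∈ range j, (1 + D / δ) ^ k) * (1 + D / δ - 1)) := by
        rw [hrange]; field_simp; ring
    _ = δ * ((1 + D / δ) ^ (j : ℕ) - 1) := by rw [geom_sum_mul]
    _ ≤ δ * (1 + D / δ) ^ (j : ℕ) := by linarith

theorem sum_eq_add_sum_Ioi_of_lt_eq_zero {ι M : Type*} [Fintype ι] [LinearOrder ι]
    [LocallyFiniteOrderTop ι] [AddCommMonoid M] {f : ι → M} (i : ι)
    (hf : ∀ j, j < i → f j = 0) : ∑ j, f j = f i + ∑ j ∈ Ioi i, f j := by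
  rw [← sum_subset (subset_univ (Ici i)) fun j _ hj => hf j (by simpa using hj),
    ← Ioi_insert, sum_insert (by simp)]

theorem mul_sum_le_sum_mul_sum_of_upper_triangular {ι : Type*} [Fintype ι] [LinearOrder ι]
    [LocallyFiniteOrderBot ι] [LocallyFiniteOrderTop ι] {B : ι → ι → ℝ} {s σ : ι → ℝ}
    {c ε D δ : ℝ} (hs : ∀ i, 0 ≤ s i) (hσ : ∀ i, 0 ≤ σ i) (hε : 0 ≤ ε)
    (hupper : ∀ i j, j < i → B i j = 0) (hdiag : ∀ i, c * s i ≤ B i i)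
    (hoff : ∀ i j, i < j → -(ε * s i + D * s j) ≤ B i j)
    (hweight : ∀ j, D * ∑ i ∈ Iio j, σ i ≤ δ * σ j) :
    (c - ε * Fintype.card ι - δ) * ∑ i, σ i * s i ≤ ∑ i, σ i * ∑ j, B i j := by
  have hrow : ∀ i, (c - ε * Fintype.card ι) * s i - ∑ j ∈ Ioi i, D * s j ≤ ∑ j, B i j := by
    intro i
    have hcard : ((Ioi i).card : ℝ) * (ε * s i) ≤ Fintype.card ι * (ε * s i) := by
      gcongr
      · exact mul_nonneg hε (hs i)
      · exact card_le_univ _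
    have hoff_sum : -(∑ j ∈ Ioi i, (ε * s i + D * s j)) ≤ ∑ j ∈ Ioi i, B i j := by
      rw [← sum_neg_distrib]
      exact sum_le_sum fun j hj => hoff i j (mem_Ioi.mp hj)
    rw [sum_add_distrib, sum_const, nsmul_eq_mul] at hoff_sum
    rw [sum_eq_add_sum_Ioi_of_lt_eq_zero i (hupper i)]
    linarith [hdiag i]
  have hswap : ∑ i, σ i * ∑ j ∈ Ioi i, D * s j = ∑ j, s j * (D * ∑ i ∈ Iio j, σ i) := by
    simp only [mul_sum]
    rw [sum_comm' (t' := univ) (s' := Iio) (by simp)]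
    exact sum_congr rfl fun j _ => sum_congr rfl fun i _ => by ring
  have hcol : ∑ j, s j * (D * ∑ i ∈ Iio j, σ i) ≤ ∑ j, s j * (δ * σ j) :=
    sum_le_sum fun j _ => mul_le_mul_of_nonneg_left (hweight j) (hs j)
  calc (c - ε * Fintype.card ι - δ) * ∑ i, σ i * s i
      = ∑ i, σ i * ((c - ε * Fintype.card ι) * s i) - ∑ j, s j * (δ * σ j) := by
        rw [← sum_sub_distrib, mul_sum]; exact sum_congr rfl fun i _ => by ring
    _ ≤ ∑ i, σ i * ((c - ε * Fintype.card ι) * s i) - ∑ i, σ i * ∑ j ∈ Ioi i, D * s j := by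
        rw [hswap]; linarith
    _ ≤ ∑ i, σ i * ∑ j, B i j := by
        rw [← sum_sub_distrib]
        exact sum_le_sum fun i _ => by
          rw [← mul_sub]; exact mul_le_mul_of_nonneg_left (hrow i) (hσ i)

theorem Finite.exists_pos_forall_le {α : Type*} [Finite α] (f : α → ℝ) :
    ∃ K, 0 < K ∧ ∀ a, f a ≤ K := by
  obtain ⟨K, hK⟩ := Finite.exists_le f
  exact ⟨max K 1, by positivity, fun a => (hK a).trans (le_max_left _ _)⟩

section Blocks

variable {ι : Type*} {κ : ι → Type*} [∀ i, Fintype (κ i)]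

def blockForm (A : Matrix (Σ i, κ i) (Σ i, κ i) ℝ) (ξ : (Σ i, κ i) → ℝ) (i j : ι) : ℝ :=
  ∑ a, ∑ b, ξ ⟨i, a⟩ * A ⟨i, a⟩ ⟨j, b⟩ * ξ ⟨j, b⟩

theorem sum_sum_mul_weight_mul_eq_sum_blockForm [Fintype ι]
    (A : Matrix (Σ i, κ i) (Σ i, κ i) ℝ) (ξ : (Σ i, κ i) → ℝ) (σ : ι → ℝ) :
    ∑ p, ∑ q, ξ p * (σ p.1 * A p q) * ξ q = ∑ i, σ i * ∑ j, blockForm A ξ i j := by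
  simp only [Fintype.sum_sigma, blockForm, mul_sum]
  refine sum_congr rfl fun i _ => ?_
  rw [sum_comm]
  exact sum_congr rfl fun j _ => sum_congr rfl fun a _ => sum_congr rfl fun b _ => by ring

theorem blockForm_eq_zero_of_lt [LT ι] {A : Matrix (Σ i, κ i) (Σ i, κ i) ℝ}
    (hupper : ∀ p q : Σ i, κ i, q.1 < p.1 → A p q = 0) (ξ : (Σ i, κ i) → ℝ) {i j : ι}
    (hji : j < i) : blockForm A ξ i j = 0 :=
  sum_eq_zero fun a _ => sum_eq_zero fun b _ => by
    rw [hupper ⟨i, a⟩ ⟨j, b⟩ hji, mul_zero, zero_mul]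

theorem neg_le_blockForm (A : Matrix (Σ i, κ i) (Σ i, κ i) ℝ) (ξ : (Σ i, κ i) → ℝ)
    {i j : ι} {K x : ℝ} (hx : 0 < x) (hK : ∑ a, ∑ b, |A ⟨i, a⟩ ⟨j, b⟩| ≤ K) :
    -(K / 2 * x * ∑ a, ξ ⟨i, a⟩ ^ 2 + K / (2 * x) * ∑ b, ξ ⟨j, b⟩ ^ 2) ≤
      blockForm A ξ i j := by
  refine le_trans ?_ (neg_le_sum_sum_mul_mul (fun a b => A ⟨i, a⟩ ⟨j, b⟩) _ _ hx)
  have hC : 0 ≤ x * ∑ a, ξ ⟨i, a⟩ ^ 2 + (∑ b, ξ ⟨j, b⟩ ^ 2) / x := by positivity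
  calc -(K / 2 * x * ∑ a, ξ ⟨i, a⟩ ^ 2 + K / (2 * x) * ∑ b, ξ ⟨j, b⟩ ^ 2)
      = -(K / 2 * (x * ∑ a, ξ ⟨i, a⟩ ^ 2 + (∑ b, ξ ⟨j, b⟩ ^ 2) / x)) := by ring
    _ ≤ _ := by nlinarith [mul_le_mul_of_nonneg_right hK hC]

theorem exists_neg_le_blockForm [Finite ι] (A : Matrix (Σ i, κ i) (Σ i, κ i) ℝ) {ε : ℝ}
    (hε : 0 < ε) : ∃ D, 0 ≤ D ∧ ∀ ξ i j,
      -(ε * ∑ a, ξ ⟨i, a⟩ ^ 2 + D * ∑ b, ξ ⟨j, b⟩ ^ 2) ≤ blockForm A ξ i j := by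
  obtain ⟨K, hK₀, hK⟩ := Finite.exists_pos_forall_le fun ij : ι × ι =>
    ∑ a, ∑ b, |A ⟨ij.1, a⟩ ⟨ij.2, b⟩|
  have hx : 0 < 2 * ε / K := by positivity
  refine ⟨K / (2 * (2 * ε / K)), by positivity, fun ξ i j => ?_⟩
  convert neg_le_blockForm A ξ hx (hK (i, j)) using 4
  field_simp

end Blocks

/-- If `A` is block upper-triangular with diagonal blocks bounded below by
`c_i > 0` times the identity, then there are positive weights `σ_i` (a positive
definite block-diagonal scaling `S`) and `η > 0` such that `SA ≥ η·I` as a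
quadratic form. -/
theorem block_upper_triangular_weighted_coercive (m : ℕ) (N : Fin m → ℕ)
    (A : Matrix ((i : Fin m) × Fin (N i)) ((i : Fin m) × Fin (N i)) ℝ)
    (hupper : ∀ p q : (i : Fin m) × Fin (N i), q.1 < p.1 → A p q = 0)
    (c : Fin m → ℝ) (hc : ∀ i, 0 < c i)
    (hdiag : ∀ (i : Fin m) (ξ : Fin (N i) → ℝ),
      c i * ∑ a, ξ a ^ 2 ≤ ∑ a, ∑ b, ξ a * A ⟨i, a⟩ ⟨i, b⟩ * ξ b) :
    ∃ σ : Fin m → ℝ, (∀ i, 0 < σ i) ∧ ∃ η : ℝ, 0 < η ∧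
      ∀ ξ : ((i : Fin m) × Fin (N i)) → ℝ,
        η * ∑ p, ξ p ^ 2 ≤ ∑ p, ∑ q, ξ p * (σ p.1 * A p q) * ξ q := by
  obtain ⟨c₀, hc₀, hc₀c⟩ := Pi.exists_forall_pos_add_lt (x := 0) hc
  simp only [Pi.zero_apply, zero_add] at hc₀c
  set ε := c₀ / (4 * (m + 1))
  have hε : ε * m ≤ c₀ / 4 := by
    rw [div_mul_eq_mul_div, div_le_div_iff₀ (by positivity) (by positivity)]; nlinarith
  obtain ⟨D, hD, hoff⟩ := exists_neg_le_blockForm A (by positivity : 0 < ε)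
  set σ : Fin m → ℝ := fun i => (1 + D / (c₀ / 4)) ^ (i : ℕ)
  have hσ : ∀ i, 1 ≤ σ i := fun i => one_le_pow₀ (le_add_of_nonneg_right (by positivity))
  refine ⟨σ, fun i => one_pos.trans_le (hσ i), c₀ / 2, by positivity, fun ξ => ?_⟩
  set s : Fin m → ℝ := fun i => ∑ a, ξ ⟨i, a⟩ ^ 2
  have hs : ∀ i, 0 ≤ s i := fun i => by positivity
  have key := mul_sum_le_sum_mul_sum_of_upper_triangular (B := blockForm A ξ) hs
    (fun i => zero_le_one.trans (hσ i)) (by positivity)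
    (fun i j => blockForm_eq_zero_of_lt hupper ξ)
    (fun i => (mul_le_mul_of_nonneg_right (hc₀c i).le (hs i)).trans (hdiag i _))
    (fun i j _ => hoff ξ i j) (Fin.mul_sum_Iio_pow_le (by positivity))
  rw [Fintype.card_fin] at key
  calc c₀ / 2 * ∑ p, ξ p ^ 2 = c₀ / 2 * ∑ i, s i := by rw [Fintype.sum_sigma]
    _ ≤ c₀ / 2 * ∑ i, σ i * s i := by
      gcongr with i; exact le_mul_of_one_le_left (hs i) (hσ i)
    _ ≤ (c₀ - ε * m - c₀ / 4) * ∑ i, σ i * s i := by gcongr; linarith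
    _ ≤ ∑ i, σ i * ∑ j, blockForm A ξ i j := key
    _ = ∑ p, ∑ q, ξ p * (σ p.1 * A p q) * ξ q :=
      (sum_sum_mul_weight_mul_eq_sum_blockForm A ξ σ).symm
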